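/- Let I ⊆ ℝ be an interval of length 1/7^m for some m ∈ ℕ, and let A ⊆ ℕ have asymptotic density d(A) > 0 with min A > m. Then there exists a sequence of intervals (I_a)_{a∈A} with |I_a| = 1/7^a and I_a ⊆ I for all a ∈ A, such that for every D ⊆ ℕ with D ∩ {0,…,m−1} = ∅ and d̲(D) < d(A)/4, and every sequence of intervals (J_d)_{d∈D} with |J_d| ≤ 1/7^(d+1) for all d ∈ D, there is a ∈ A such that I_a ∩ ⋃_{d∈D, d<a} J_d = ∅. -/

import Mathlib

open MeasureTheory Filter

/-- `S ⊆ ℝ` is an interval. -/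
def IsIntervalSet (S : Set ℝ) : Prop := S.OrdConnected

/-- A set `M ⊆ ℝ` is microscopic if for each `ε > 0` there is a sequence of intervals
`(J n)` covering `M` with `|J n| ≤ ε ^ (n + 1)` for each `n`. -/
def Microscopic (M : Set ℝ) : Prop :=
  ∀ ε : ℝ, 0 < ε → ∃ J : ℕ → Set ℝ,
    (∀ n, IsIntervalSet (J n)) ∧ M ⊆ (⋃ n, J n) ∧
      ∀ n, volume (J n) ≤ ENNReal.ofReal (ε ^ (n + 1))

/-- `A ⊆ ℕ` has asymptotic density `δ`. -/
def HasDensity (A : Set ℕ) (δ : ℝ) : Prop :=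
  Tendsto (fun j : ℕ => ((A ∩ Set.Iic j).ncard : ℝ) / ((j : ℝ) + 1)) atTop (nhds δ)

/-- The lower asymptotic density of `A ⊆ ℕ`. -/
noncomputable def lowerDensity (A : Set ℕ) : ℝ :=
  liminf (fun j : ℕ => ((A ∩ Set.Iic j).ncard : ℝ) / ((j : ℝ) + 1)) atTop


private noncomputable def vdc7 : ℕ → ℝ
  | 0 => 0
  | (k+1) => (((k+1) % 7 : ℕ) : ℝ) / 7 + vdc7 ((k + 1) / 7) / 7
decreasing_by exact Nat.div_lt_self (Nat.succ_pos _) (by norm_num)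

private lemma vdc7_zero : vdc7 0 = 0 := by rw [vdc7]

private lemma vdc7_eq (k : ℕ) : vdc7 k = ((k % 7 : ℕ) : ℝ) / 7 + vdc7 (k / 7) / 7 := by
  rcases k with _ | k
  · simp [vdc7_zero]
  · rw [vdc7]

private lemma vdc7_nonneg (k : ℕ) : 0 ≤ vdc7 k := by
  induction k using Nat.strong_induction_on with
  | _ k ih =>
    rcases k with _ | k
    · simp [vdc7_zero]
    · rw [vdc7_eq]
      have h1 := ih ((k+1)/7) (Nat.div_lt_self (Nat.succ_pos _) (by norm_num))
      have h2 : (0:ℝ) ≤ (((k+1) % 7 : ℕ) : ℝ) := Nat.cast_nonneg _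
      linarith

private lemma vdc7_le (k : ℕ) : vdc7 k ≤ 1 - (1/7:ℝ)^k := by
  induction k using Nat.strong_induction_on with
  | _ k ih =>
    rcases k with _ | n
    · simp [vdc7_zero]
    · set k := n + 1 with hk
      have hlt : k / 7 < k := Nat.div_lt_self (Nat.succ_pos _) (by norm_num)
      have h1 := ih (k/7) hlt
      have h2 : ((k % 7 : ℕ) : ℝ) ≤ 6 := by
        have : k % 7 < 7 := Nat.mod_lt _ (by norm_num)
        exact_mod_cast Nat.lt_succ_iff.mp this
      have h3 : (1/7:ℝ)^k ≤ (1/7)^(k/7+1) :=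
        pow_le_pow_of_le_one (by norm_num) (by norm_num) (by omega)
      have h4 : (1/7:ℝ)^(k/7+1) = (1/7)^(k/7) * (1/7) := pow_succ _ _
      rw [vdc7_eq]
      linarith

private lemma vdc7_decomp (r : ℕ) : ∀ k, vdc7 k = vdc7 (k % 7^r) + (1/7:ℝ)^r * vdc7 (k / 7^r) := by
  induction r with
  | zero => intro k; simp [Nat.mod_one, vdc7_zero]
  | succ r ih =>
    intro k
    have h1 : k % 7^(r+1) % 7 = k % 7 := Nat.mod_mod_of_dvd _ (dvd_pow_self 7 (Nat.succ_ne_zero r))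
    have h2 : k % 7^(r+1) / 7 = k / 7 % 7^r := by
      rw [pow_succ']; exact Nat.mod_mul_right_div_self k 7 (7^r)
    have h3 : k / 7^(r+1) = k / 7 / 7^r := by
      rw [pow_succ']; exact (Nat.div_div_eq_div_mul k 7 (7^r)).symm
    rw [vdc7_eq k, vdc7_eq (k % 7^(r+1)), h1, h2, h3, ih (k/7)]
    ring

private def natRev : ℕ → ℕ → ℕ
  | 0, _ => 0
  | (r+1), k => (k % 7) * 7^r + natRev r (k / 7)

private lemma natRev_lt (r : ℕ) : ∀ k, natRev r k < 7^r := by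
  induction r with
  | zero => intro k; simp [natRev]
  | succ r ih =>
    intro k
    have h1 := ih (k/7)
    have h2 : k % 7 + 1 ≤ 7 := Nat.mod_lt _ (by norm_num)
    calc natRev (r+1) k = (k % 7) * 7^r + natRev r (k/7) := rfl
      _ < (k % 7) * 7^r + 7^r := by omega
      _ = (k % 7 + 1) * 7^r := by ring
      _ ≤ 7 * 7^r := Nat.mul_le_mul_right _ h2
      _ = 7^(r+1) := (pow_succ' 7 r).symm

private lemma vdc7_eq_natRev (r : ℕ) : ∀ k, k < 7^r → vdc7 k = (natRev r k : ℝ) / 7^r := by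
  induction r with
  | zero => intro k hk; interval_cases k; simp [vdc7_zero, natRev]
  | succ r ih =>
    intro k hk
    have hk7 : k / 7 < 7^r := by
      rw [Nat.div_lt_iff_lt_mul (by norm_num)]
      calc k < 7^(r+1) := hk
        _ = 7^r * 7 := pow_succ 7 r
    rw [vdc7_eq, ih (k/7) hk7]
    show ((k % 7 : ℕ) : ℝ) / 7 + ((natRev r (k/7) : ℝ) / 7^r) / 7 = ((k % 7) * 7^r + natRev r (k / 7) : ℕ) / 7^(r+1)
    have h7 : (7:ℝ)^r ≠ 0 := by positivity
    push_cast
    field_simp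
    ring

private lemma natRev_inj (r : ℕ) : ∀ k k', k < 7^r → k' < 7^r → natRev r k = natRev r k' → k = k' := by
  induction r with
  | zero => intro k k' hk hk' _; omega
  | succ r ih =>
    intro k k' hk hk' he
    have hpos : 0 < 7^r := Nat.pow_pos (by norm_num)
    have b1 := natRev_lt r (k/7)
    have b2 := natRev_lt r (k'/7)
    have he' : (k % 7) * 7^r + natRev r (k/7) = (k' % 7) * 7^r + natRev r (k'/7) := he
    have e1 : natRev r (k/7) + (k%7) * 7^r = natRev r (k'/7) + (k'%7)*7^r := by
      rw [Nat.add_comm, Nat.add_comm (natRev r (k'/7))]; exact he'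
    have hq : k % 7 = k' % 7 := by
      have h2 := congrArg (· / 7^r) e1
      simpa [Nat.add_mul_div_right _ _ hpos, Nat.div_eq_of_lt b1, Nat.div_eq_of_lt b2] using h2
    have hd : natRev r (k/7) = natRev r (k'/7) := by
      rw [hq] at he'; exact Nat.add_left_cancel he'
    have hk7 : k / 7 < 7^r := by
      rw [Nat.div_lt_iff_lt_mul (by norm_num)]
      calc k < 7^(r+1) := hk
        _ = 7^r * 7 := pow_succ 7 r
    have hk7' : k' / 7 < 7^r := by
      rw [Nat.div_lt_iff_lt_mul (by norm_num)]
      calc k' < 7^(r+1) := hk'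
        _ = 7^r * 7 := pow_succ 7 r
    have hdiv : k / 7 = k' / 7 := ih _ _ hk7 hk7' hd
    have m1 := Nat.div_add_mod k 7
    have m2 := Nat.div_add_mod k' 7
    omega

private lemma mod_class_card (n Q ρ : ℕ) (hQ : 0 < Q) :
    ((Finset.range n).filter (fun k => k % Q = ρ)).card ≤ n / Q + 1 := by
  have : ((Finset.range n).filter (fun k => k % Q = ρ)).card ≤ (Finset.range (n / Q + 1)).card := by
    apply Finset.card_le_card_of_injOn (fun k => k / Q)
    · intro a ha
      have ha' := Finset.mem_filter.1 ha
      have h1 : a < n := Finset.mem_range.1 ha'.1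
      have : a / Q ≤ n / Q := Nat.div_le_div_right h1.le
      exact Finset.mem_range.2 (by show a / Q < n / Q + 1; omega)
    · intro a ha b hb hab
      have ha' := Finset.mem_filter.1 ha
      have hb' := Finset.mem_filter.1 hb
      calc a = Q * (a/Q) + a % Q := (Nat.div_add_mod a Q).symm
        _ = Q * (b/Q) + b % Q := by rw [show a / Q = b / Q from hab, ha'.2, hb'.2]
        _ = b := Nat.div_add_mod b Q
  simpa using this

private lemma natrev_class_card (n r N : ℕ) :
    ((Finset.range n).filter (fun k => natRev r (k % 7^r) = N)).card ≤ n / 7^r + 1 := by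
  have hpos : 0 < 7^r := Nat.pow_pos (by norm_num)
  by_cases hne : ((Finset.range n).filter (fun k => natRev r (k % 7^r) = N)).Nonempty
  · obtain ⟨k0, hk0⟩ := hne
    have hk0' := Finset.mem_filter.1 hk0
    have hsub : ((Finset.range n).filter (fun k => natRev r (k % 7^r) = N)) ⊆
        ((Finset.range n).filter (fun k => k % 7^r = k0 % 7^r)) := by
      intro k hk
      have hk' := Finset.mem_filter.1 hk
      refine Finset.mem_filter.2 ⟨hk'.1, ?_⟩
      exact natRev_inj r _ _ (Nat.mod_lt _ hpos) (Nat.mod_lt _ hpos) (hk'.2.trans hk0'.2.symm)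
    exact le_trans (Finset.card_le_card hsub) (mod_class_card n _ _ hpos)
  · rw [Finset.not_nonempty_iff_eq_empty] at hne
    rw [hne]; simp

private lemma killed_residues (r n : ℕ) (c S : ℝ) (hS : 0 < S)
    (W : Set ℝ) (hW : W.OrdConnected) (hvol : volume W ≤ ENNReal.ofReal S)
    (T : Finset ℕ) (hTn : ∀ k ∈ T, k < n)
    (hT : ∀ k ∈ T, ∃ y ∈ W,
      c + S * (natRev r (k % 7^r) : ℝ) ≤ y ∧ y < c + S * ((natRev r (k % 7^r) : ℝ) + 1)) :
    T.card ≤ 2 * (n / 7^r) + 2 := by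
  by_cases hne : T.Nonempty
  · have hchoice : ∀ k : ℕ, ∃ y : ℝ, k ∈ T → (y ∈ W ∧
        c + S * (natRev r (k % 7^r) : ℝ) ≤ y ∧ y < c + S * ((natRev r (k % 7^r) : ℝ) + 1)) := by
      intro k
      by_cases hk : k ∈ T
      · obtain ⟨y, hy1, hy2⟩ := hT k hk
        exact ⟨y, fun _ => ⟨hy1, hy2⟩⟩
      · exact ⟨0, fun h => absurd h hk⟩
    choose Y hY using hchoice
    obtain ⟨k0, hk0, hmin⟩ := T.exists_min_image Y hne
    have key : ∀ k ∈ T, natRev r (k % 7^r) = natRev r (k0 % 7^r) ∨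
        natRev r (k % 7^r) = natRev r (k0 % 7^r) + 1 := by
      intro k hk
      obtain ⟨hYW, hY1, hY2⟩ := hY k hk
      obtain ⟨hYW0, hY01, hY02⟩ := hY k0 hk0
      have hle : Y k0 ≤ Y k := hmin k hk
      have hdiff : Y k - Y k0 ≤ S := by
        have hsub : Set.Icc (Y k0) (Y k) ⊆ W := hW.out hYW0 hYW
        have h1 : volume (Set.Icc (Y k0) (Y k)) ≤ ENNReal.ofReal S :=
          le_trans (measure_mono hsub) hvol
        rw [Real.volume_Icc] at h1
        have := (ENNReal.ofReal_le_ofReal_iff hS.le).1 h1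
        linarith
      have h1 : ((natRev r (k % 7^r) : ℕ) : ℝ) < ((natRev r (k0 % 7^r) : ℕ) : ℝ) + 2 := by
        nlinarith
      have h2 : ((natRev r (k0 % 7^r) : ℕ) : ℝ) < ((natRev r (k % 7^r) : ℕ) : ℝ) + 1 := by
        nlinarith
      have h1' : natRev r (k % 7^r) < natRev r (k0 % 7^r) + 2 := by exact_mod_cast h1
      have h2' : natRev r (k0 % 7^r) < natRev r (k % 7^r) + 1 := by exact_mod_cast h2
      omega
    have hsub : T ⊆ ((Finset.range n).filter (fun k => natRev r (k % 7^r) = natRev r (k0 % 7^r))) ∪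
        ((Finset.range n).filter (fun k => natRev r (k % 7^r) = natRev r (k0 % 7^r) + 1)) := by
      intro k hk
      rcases key k hk with h | h
      · exact Finset.mem_union_left _ (Finset.mem_filter.2 ⟨Finset.mem_range.2 (hTn k hk), h⟩)
      · exact Finset.mem_union_right _ (Finset.mem_filter.2 ⟨Finset.mem_range.2 (hTn k hk), h⟩)
    calc T.card ≤ _ := Finset.card_le_card hsub
      _ ≤ _ + _ := Finset.card_union_le _ _
      _ ≤ (n / 7^r + 1) + (n / 7^r + 1) := Nat.add_le_add (natrev_class_card n r _) (natrev_class_card n r _)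
      _ = 2 * (n / 7^r) + 2 := by omega
  · rw [Finset.not_nonempty_iff_eq_empty] at hne
    rw [hne]; simp

private lemma seven_div_bound (r k : ℕ) (h : 7^r ≤ k) : r + k / 7^r ≤ k + 1 := by
  set t := k / 7^r with ht
  have hpos : 0 < 7^r := Nat.pow_pos (by norm_num)
  have ht1 : 1 ≤ t := (Nat.one_le_div_iff hpos).2 h
  have h7 : r < 7^r := Nat.lt_pow_self (by norm_num : 1 < 7)
  have hmul : t * 7^r ≤ k := Nat.div_mul_le_self k (7^r)
  have : t * 7^r ≥ t * (r + 1) := Nat.mul_le_mul_left t h7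
  have : t * (r+1) = t + t * r := by ring
  have : t * r ≥ r := Nat.le_mul_of_pos_left r ht1
  nlinarith

private lemma geom_tail (n : ℕ) : ∑ t ∈ Finset.range n, ((1:ℝ)/7)^(t+1) ≤ 1/6 := by
  have h : ∑ t ∈ Finset.range n, ((1:ℝ)/7)^(t+1) = (1 - (1/7:ℝ)^n)/6 := by
    induction n with
    | zero => simp
    | succ n ih =>
      rw [Finset.sum_range_succ, ih, pow_succ]
      ring
  rw [h]
  have : (0:ℝ) ≤ (1/7:ℝ)^n := by positivity
  linarith

set_option maxHeartbeats 1600000 in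
theorem spacing_algorithm_corollary (m : ℕ) (I : Set ℝ) (hI : IsIntervalSet I)
    (hIlen : volume I = ENNReal.ofReal ((1 / 7 : ℝ) ^ m))
    (A : Set ℕ) (δA : ℝ) (hδA : 0 < δA) (hA : HasDensity A δA)
    (hAm : ∀ a ∈ A, m < a) :
    ∃ Iseq : ℕ → Set ℝ,
      (∀ a ∈ A, IsIntervalSet (Iseq a) ∧ Iseq a ⊆ I ∧
        volume (Iseq a) = ENNReal.ofReal ((1 / 7 : ℝ) ^ a)) ∧
      ∀ D : Set ℕ, (∀ d ∈ D, m ≤ d) → lowerDensity D < δA / 4 →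
        ∀ J : ℕ → Set ℝ,
          (∀ d ∈ D, IsIntervalSet (J d) ∧
            volume (J d) ≤ ENNReal.ofReal ((1 / 7 : ℝ) ^ (d + 1))) →
          ∃ a ∈ A, Iseq a ∩ (⋃ d ∈ D ∩ Set.Iio a, J d) = ∅ := by
  classical
  have e_pos : (0:ℝ) < (1/7:ℝ)^m := by positivity
  have hIne : I.Nonempty := by
    rcases Set.eq_empty_or_nonempty I with h | h
    · exfalso
      rw [h, measure_empty, eq_comm, ENNReal.ofReal_eq_zero] at hIlen
      linarith
    · exact h
  obtain ⟨z, hz⟩ := hIne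
  have hba : BddAbove I := by
    by_contra hb
    have hsub : Set.Ici z ⊆ I := by
      intro w hw
      obtain ⟨u, hu, hwu⟩ := (not_bddAbove_iff.1 hb) w
      exact hI.out hz hu ⟨hw, hwu.le⟩
    have h2 : volume (Set.Ici z) ≤ volume I := measure_mono hsub
    rw [hIlen, Real.volume_Ici] at h2
    exact absurd (top_le_iff.1 h2) (by simp)
  have hbb : BddBelow I := by
    by_contra hb
    have hsub : Set.Iic z ⊆ I := by
      intro w hw
      obtain ⟨u, hu, hwu⟩ := (not_bddBelow_iff.1 hb) w
      exact hI.out hu hz ⟨hwu.le, hw⟩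
    have h2 : volume (Set.Iic z) ≤ volume I := measure_mono hsub
    rw [hIlen, Real.volume_Iic] at h2
    exact absurd (top_le_iff.1 h2) (by simp)
  set c := sInf I with hc
  have hIoo0 : Set.Ioo c (sSup I) ⊆ I := by
    intro w hw
    obtain ⟨u, hu, h1⟩ := exists_lt_of_csInf_lt ⟨z, hz⟩ hw.1
    obtain ⟨v, hv, h2⟩ := exists_lt_of_lt_csSup ⟨z, hz⟩ hw.2
    exact hI.out hu hv ⟨h1.le, h2.le⟩
  have hsup : sSup I = c + (1/7:ℝ)^m := by
    have h2 : I ⊆ Set.Icc c (sSup I) := fun y hy => ⟨csInf_le hbb hy, le_csSup hba hy⟩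
    have v1 : volume I ≤ ENNReal.ofReal (sSup I - c) := by
      rw [← Real.volume_Icc]; exact measure_mono h2
    have v2 : ENNReal.ofReal (sSup I - c) ≤ volume I := by
      rw [← Real.volume_Ioo]; exact measure_mono hIoo0
    have hcs : c ≤ sSup I := csInf_le_csSup ⟨z, hz⟩ hbb hba
    have he' : ENNReal.ofReal (sSup I - c) = ENNReal.ofReal ((1/7:ℝ)^m) := by
      rw [← hIlen]; exact le_antisymm v2 v1
    have := (ENNReal.ofReal_eq_ofReal_iff (by linarith) e_pos.le).1 he'
    linarith
  have hIoo : Set.Ioo c (c + (1/7:ℝ)^m) ⊆ I := by rw [← hsup]; exact hIoo0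
  have hAinf : A.Infinite := by
    by_contra hfin
    rw [Set.not_infinite] at hfin
    have hbnd : ∀ j : ℕ, ((A ∩ Set.Iic j).ncard : ℝ) / ((j : ℝ) + 1) ≤ (A.ncard : ℝ) / ((j : ℝ) + 1) := by
      intro j
      have hnc : ((A ∩ Set.Iic j).ncard : ℝ) ≤ (A.ncard : ℝ) := by
        exact_mod_cast Set.ncard_le_ncard Set.inter_subset_left hfin
      have hj : (0:ℝ) < (j:ℝ) + 1 := by positivity
      exact (div_le_div_iff_of_pos_right hj).2 hnc
    have hg : Tendsto (fun j : ℕ => (A.ncard : ℝ) / ((j : ℝ) + 1)) atTop (nhds 0) :=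
      Tendsto.div_atTop tendsto_const_nhds
        (tendsto_atTop_add_const_right _ 1 tendsto_natCast_atTop_atTop)
    have hten : Tendsto (fun j : ℕ => ((A ∩ Set.Iic j).ncard : ℝ) / ((j : ℝ) + 1)) atTop (nhds 0) :=
      squeeze_zero (fun j => by positivity) hbnd hg
    have := tendsto_nhds_unique hA hten
    linarith
  set p : ℕ → Prop := fun n => n ∈ A with hp
  have hpinf : (setOf p).Infinite := by
    have hps : setOf p = A := Set.setOf_mem_eq
    rwa [hps]
  have hnth : ∀ k, m + 1 + k ≤ Nat.nth p k := by
    intro k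
    induction k with
    | zero =>
      have h1 : p (Nat.nth p 0) := Nat.nth_mem_of_infinite hpinf 0
      have := hAm _ h1
      omega
    | succ k ih =>
      have hlt : Nat.nth p k < Nat.nth p (k+1) := (Nat.nth_strictMono hpinf) (by omega)
      omega
  have hcnt : ∀ a, a ∈ A → m + 1 + Nat.count p a ≤ a := by
    intro a ha
    have h := hnth (Nat.count p a)
    rwa [Nat.nth_count ha] at h
  set x : ℕ → ℝ := fun k => c + (1/7:ℝ)^m * vdc7 k with hx
  have hsubI : ∀ a ∈ A, Set.Ioo (x (Nat.count p a)) (x (Nat.count p a) + (1/7:ℝ)^a) ⊆ I := by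
    intro a ha
    set k := Nat.count p a with hk
    have h1 : vdc7 k ≤ 1 - (1/7:ℝ)^k := vdc7_le k
    have h2 : (1/7:ℝ)^a ≤ (1/7:ℝ)^m * (1/7:ℝ)^(k+1) := by
      rw [← pow_add]
      exact pow_le_pow_of_le_one (by norm_num) (by norm_num) (by have := hcnt a ha; omega)
    have h3 : (1/7:ℝ)^(k+1) = (1/7:ℝ)^k * (1/7) := pow_succ _ _
    have hpk : (0:ℝ) < (1/7:ℝ)^k := by positivity
    have hup : x k + (1/7:ℝ)^a ≤ c + (1/7:ℝ)^m := by
      simp only [hx]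
      nlinarith [mul_le_mul_of_nonneg_left h1 e_pos.le]
    have hlo : c ≤ x k := by
      simp only [hx]
      nlinarith [mul_nonneg e_pos.le (vdc7_nonneg k)]
    intro y hy
    apply hIoo
    exact ⟨lt_of_le_of_lt hlo hy.1, lt_of_lt_of_le hy.2 hup⟩
  refine ⟨fun a => Set.Ioo (x (Nat.count p a)) (x (Nat.count p a) + (1/7:ℝ)^a), ?_, ?_⟩
  · intro a ha
    refine ⟨Set.ordConnected_Ioo, hsubI a ha, ?_⟩
    rw [Real.volume_Ioo]
    congr 1
    ring
  · intro D hDm hDlow J hJ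
    by_contra hcon
    push_neg at hcon
    have hkill : ∀ a ∈ A, ∃ d, d ∈ D ∧ d < a ∧
        (Set.Ioo (x (Nat.count p a)) (x (Nat.count p a) + (1/7:ℝ)^a) ∩ J d).Nonempty := by
      intro a ha
      have h := hcon a ha
      obtain ⟨y, hy1, hy2⟩ := h
      simp only [Set.mem_iUnion, exists_prop] at hy2
      obtain ⟨d, ⟨hdD, hda⟩, hyd⟩ := hy2
      exact ⟨d, hdD, hda, ⟨y, hy1, hyd⟩⟩
    set β : ℝ := (lowerDensity D + δA/4)/2 with hβ
    have hβ1 : lowerDensity D < β := by rw [hβ]; linarith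
    have hβ2 : 3*β < δA := by rw [hβ]; linarith
    have hfreq : ∃ᶠ j in atTop, ((D ∩ Set.Iic j).ncard : ℝ)/((j:ℝ)+1) < β := by
      apply frequently_lt_of_liminf_lt ?_ hβ1
      apply Filter.isCoboundedUnder_ge_of_eventually_le (x := 1) atTop
      filter_upwards with j
      rw [div_le_one (by positivity)]
      have h1 : (D ∩ Set.Iic j).ncard ≤ (Set.Iic j).ncard :=
        Set.ncard_le_ncard Set.inter_subset_right (Set.finite_Iic j)
      have h2 : (Set.Iic (j:ℕ)).ncard = j + 1 := by
        rw [← Finset.coe_Iic, Set.ncard_coe_finset, Nat.card_Iic]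
      rw [h2] at h1
      exact_mod_cast h1
    have hev : ∀ᶠ j in atTop, 3*β < ((A ∩ Set.Iic j).ncard : ℝ)/((j:ℝ)+1) :=
      hA.eventually (eventually_gt_nhds hβ2)
    obtain ⟨j, hjD, hjA⟩ := (hfreq.and_eventually hev).exists
    have hj1 : (0:ℝ) < (j:ℝ)+1 := by positivity
    rw [div_lt_iff₀ hj1] at hjD
    rw [lt_div_iff₀ hj1] at hjA
    set FA := (Finset.range (j+1)).filter p with hFA
    set FD := (Finset.range (j+1)).filter (fun d => d ∈ D) with hFD
    have hAcard : (A ∩ Set.Iic j).ncard = FA.card := by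
      rw [← Set.ncard_coe_finset]
      congr 1
      ext t
      simp [hFA, hp, Nat.lt_succ_iff, and_comm]
    have hDcard : (D ∩ Set.Iic j).ncard = FD.card := by
      rw [← Set.ncard_coe_finset]
      congr 1
      ext t
      simp [hFD, Nat.lt_succ_iff, and_comm]
    set nA := FA.card with hnA
    set nD := FD.card with hnD
    have hcover : FA ⊆ FD.biUnion (fun d => FA.filter (fun a => d < a ∧
        (Set.Ioo (x (Nat.count p a)) (x (Nat.count p a) + (1/7:ℝ)^a) ∩ J d).Nonempty)) := by
      intro a ha
      have haA : a ∈ A := (Finset.mem_filter.1 ha).2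
      have haj : a < j+1 := Finset.mem_range.1 (Finset.mem_filter.1 ha).1
      obtain ⟨d, hdD, hda, hne⟩ := hkill a haA
      refine Finset.mem_biUnion.2 ⟨d, ?_, ?_⟩
      · exact Finset.mem_filter.2 ⟨Finset.mem_range.2 (by omega), hdD⟩
      · exact Finset.mem_filter.2 ⟨ha, hda, hne⟩
    have hsum : nA ≤ ∑ d ∈ FD, (FA.filter (fun a => d < a ∧
        (Set.Ioo (x (Nat.count p a)) (x (Nat.count p a) + (1/7:ℝ)^a) ∩ J d).Nonempty)).card :=
      le_trans (Finset.card_le_card hcover) Finset.card_biUnion_le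
    have hper : ∀ d ∈ FD, (FA.filter (fun a => d < a ∧
        (Set.Ioo (x (Nat.count p a)) (x (Nat.count p a) + (1/7:ℝ)^a) ∩ J d).Nonempty)).card
        ≤ 2 * (nA / 7^(d+1-m)) + 2 := by
      intro d hd
      have hdD : d ∈ D := (Finset.mem_filter.1 hd).2
      have hdm : m ≤ d := hDm d hdD
      set r := d + 1 - m with hr
      have hmr : m + r = d + 1 := by omega
      set S : ℝ := (1/7:ℝ)^(d+1) with hS
      have hSpos : 0 < S := by positivity
      have hSe : S = (1/7:ℝ)^m * (1/7:ℝ)^r := by rw [hS, ← pow_add, hmr]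
      set Kd := FA.filter (fun a => d < a ∧
        (Set.Ioo (x (Nat.count p a)) (x (Nat.count p a) + (1/7:ℝ)^a) ∩ J d).Nonempty) with hKd
      have hinj : Set.InjOn (fun a => Nat.count p a) Kd := by
        intro a ha b hb hab
        have haA : a ∈ A := (Finset.mem_filter.1 ((Finset.mem_filter.1 ha).1)).2
        have hbA : b ∈ A := (Finset.mem_filter.1 ((Finset.mem_filter.1 hb).1)).2
        simp only at hab
        rw [← Nat.nth_count (p := p) haA, ← Nat.nth_count (p := p) hbA, hab]
      rw [show Kd.card = (Kd.image (fun a => Nat.count p a)).card from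
        (Finset.card_image_of_injOn hinj).symm]
      apply killed_residues r nA c S hSpos (J d) (hJ d hdD).1 (hJ d hdD).2
      · intro k hk
        obtain ⟨a, haK, rfl⟩ := Finset.mem_image.1 hk
        have haFA : a ∈ FA := (Finset.mem_filter.1 haK).1
        have hsubset : (Finset.range a).filter p ⊆ FA := by
          intro t ht
          have ht' := Finset.mem_filter.1 ht
          have h1 : t < a := Finset.mem_range.1 ht'.1
          have h2 : a < j + 1 := Finset.mem_range.1 (Finset.mem_filter.1 haFA).1
          exact Finset.mem_filter.2 ⟨Finset.mem_range.2 (by omega), ht'.2⟩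
        have hss : (Finset.range a).filter p ⊂ FA := by
          rw [Finset.ssubset_iff_of_subset hsubset]
          exact ⟨a, haFA, by simp⟩
        show Nat.count p a < nA
        rw [Nat.count_eq_card_filter_range]
        exact Finset.card_lt_card hss
      · intro k0 hk0
        obtain ⟨a, haK, rfl⟩ := Finset.mem_image.1 hk0
        obtain ⟨haFA, hda, hne⟩ := Finset.mem_filter.1 haK
        have haA : a ∈ A := (Finset.mem_filter.1 haFA).2
        obtain ⟨y, hyI, hyJ⟩ := hne
        set k := Nat.count p a with hkdef
        have hQpos : 0 < 7^r := Nat.pow_pos (by norm_num)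
        have hmodlt : k % 7^r < 7^r := Nat.mod_lt _ hQpos
        have hdec := vdc7_decomp r k
        have hNval : vdc7 (k % 7^r) = ((natRev r (k % 7^r) : ℕ) : ℝ)/(7:ℝ)^r :=
          vdc7_eq_natRev r _ hmodlt
        have h7r : (1/7:ℝ)^r = 1/(7:ℝ)^r := one_div_pow 7 r
        have hEN : (1/7:ℝ)^m * vdc7 (k % 7^r) = S * ((natRev r (k % 7^r) : ℕ) : ℝ) := by
          rw [hNval, hSe, h7r]
          have h7ne : (7:ℝ)^r ≠ 0 := by positivity
          field_simp
        have hkey : (1/7:ℝ)^m * ((1/7:ℝ)^r * vdc7 (k / 7^r)) = S * vdc7 (k / 7^r) := by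
          rw [hSe]; ring
        have hxk : x k = c + S * ((natRev r (k % 7^r) : ℕ) : ℝ) + S * vdc7 (k / 7^r) := by
          simp only [hx]
          rw [hdec, mul_add, hEN, hkey]
          ring
        have hklt : (1/7:ℝ)^a ≤ S * (1/7:ℝ)^(k / 7^r) := by
          rw [hS, ← pow_add]
          apply pow_le_pow_of_le_one (by norm_num) (by norm_num)
          rcases lt_or_ge k (7^r) with hcase | hcase
          · rw [Nat.div_eq_of_lt hcase]
            omega
          · have hsb := seven_div_bound r k hcase
            have hca := hcnt a haA
            omega
        have hvle : vdc7 (k/7^r) ≤ 1 - (1/7:ℝ)^(k/7^r) := vdc7_le _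
        have hvnn : 0 ≤ vdc7 (k/7^r) := vdc7_nonneg _
        have hlow : c + S * ((natRev r (k % 7^r) : ℕ) : ℝ) ≤ x k := by
          rw [hxk]
          nlinarith [mul_nonneg hSpos.le hvnn]
        have hhigh : x k + (1/7:ℝ)^a ≤ c + S * (((natRev r (k % 7^r) : ℕ) : ℝ) + 1) := by
          rw [hxk]
          nlinarith [mul_le_mul_of_nonneg_left hvle hSpos.le]
        exact ⟨y, hyJ, le_trans hlow hyI.1.le, lt_of_lt_of_le hyI.2 hhigh⟩
    have hsumR : (nA:ℝ) ≤ ∑ d ∈ FD, (2*(nA:ℝ)*((1/7:ℝ)^(d+1-m)) + 2) := by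
      have h1 : (nA:ℝ) ≤ ∑ d ∈ FD, ((2 * (nA / 7^(d+1-m)) + 2 : ℕ) : ℝ) := by
        rw [← Nat.cast_sum]
        exact_mod_cast le_trans hsum (Finset.sum_le_sum hper)
      refine le_trans h1 (Finset.sum_le_sum ?_)
      intro d hd
      push_cast
      have h2 : ((nA / 7^(d+1-m) : ℕ) : ℝ) ≤ (nA:ℝ)/((7:ℝ)^(d+1-m)) := by
        have h3 := Nat.cast_div_le (α := ℝ) (m := nA) (n := 7^(d+1-m))
        push_cast at h3
        exact h3
      have h3 : (nA:ℝ)/((7:ℝ)^(d+1-m)) = (nA:ℝ)*((1/7:ℝ)^(d+1-m)) := by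
        rw [one_div_pow]; ring
      rw [h3] at h2
      linarith
    have hgeom : ∑ d ∈ FD, ((1:ℝ)/7)^(d+1-m) ≤ 1/6 := by
      have hre : ∀ d ∈ FD, ((1:ℝ)/7)^(d+1-m) = ((1:ℝ)/7)^((d-m)+1) := by
        intro d hd
        have hdm : m ≤ d := hDm d (Finset.mem_filter.1 hd).2
        have : d + 1 - m = (d - m) + 1 := by omega
        rw [this]
      rw [Finset.sum_congr rfl hre]
      have himg : ∑ d ∈ FD, ((1:ℝ)/7)^((d-m)+1) =
          ∑ t ∈ FD.image (fun d => d - m), ((1:ℝ)/7)^(t+1) := by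
        rw [Finset.sum_image ?_]
        intro a ha b hb hab
        have h1 : m ≤ a := hDm a (Finset.mem_filter.1 ha).2
        have h2 : m ≤ b := hDm b (Finset.mem_filter.1 hb).2
        have hab' : a - m = b - m := hab
        omega
      rw [himg]
      refine le_trans (Finset.sum_le_sum_of_subset_of_nonneg ?_ ?_) (geom_tail (j+1))
      · intro t ht
        obtain ⟨d, hd, rfl⟩ := Finset.mem_image.1 ht
        have h1 : d < j+1 := Finset.mem_range.1 (Finset.mem_filter.1 hd).1
        exact Finset.mem_range.2 (by omega)
      · intro t _ _
        positivity
    have hfinal : (nA:ℝ) ≤ 2*(nA:ℝ)*(1/6) + 2*(nD:ℝ) := by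
      refine le_trans hsumR ?_
      rw [Finset.sum_add_distrib, Finset.sum_const, ← Finset.mul_sum]
      have h1 : 2*(nA:ℝ) * ∑ d ∈ FD, ((1:ℝ)/7)^(d+1-m) ≤ 2*(nA:ℝ)*(1/6) :=
        mul_le_mul_of_nonneg_left hgeom (by positivity)
      have h2 : (FD.card • (2:ℝ)) = 2*(nD:ℝ) := by
        rw [nsmul_eq_mul]; ring
      rw [h2]
      linarith
    rw [hAcard] at hjA
    rw [hDcard] at hjD
    linarith
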